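/- arXiv:2402.13713 — 4 statements merged into one kernel-verified Lean document; each statement's English description precedes it below -/
import Mathlib

section
/- Let K be a number field and let 𝒢 = ⟨f_1, …, f_s⟩ be a semigroup (under composition) generated by rational maps f_i of degree d_i ≥ 2 defined over K, with d := max_i d_i. Suppose each sequence 𝐟 = (f_{i_k})_{k≥1} obtained from 𝒢 has an associated canonical height ĥ_𝐟 satisfying |ĥ_𝐟(x) − h(x)| ≤ 2c(𝒢) for all x and ĥ_{T(𝐟)}(f_{i_1}(x)) = d_{i_1}·ĥ_𝐟(x), where c(𝒢) = max_i sup_x |(1/d_i)h(f_i(x)) − h(x)| and T is the shift. If β ∈ K̄ is not preperiodic for 𝒢 (meaning the forward orbit of β under every sequence obtained from 𝒢 is infinite), then there exists a constant c₀ > 0 depending only on 𝒢, K and [K(β):K] such that ĥ_𝐟(β) ≥ c₀ for every sequence 𝐟 obtained from 𝒢. -/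
/-- The absolute logarithmic Weil height of an algebraic number (Mahler measure of the
primitive integer minimal polynomial, divided by the degree). -/
noncomputable def weilHeight (α : AlgebraicClosure ℚ) : ℝ :=
  (Real.log (((minpoly ℚ α).support.lcm fun i => ((minpoly ℚ α).coeff i).den : ℕ) : ℝ) +
      (((minpoly ℚ α).aroots ℂ).map fun z => Real.log (max 1 ‖z‖)).sum) /
    ((minpoly ℚ α).natDegree : ℝ)

open Classical in
/-- The Weil height of the point `[x : y] ∈ ℙ¹(ℚ̄)`. -/
noncomputable def pairHeight (x y : AlgebraicClosure ℚ) : ℝ :=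
  if y = 0 then 0 else weilHeight (x / y)

/-- `ℙ¹(ℚ̄)`. -/
abbrev P1 := Projectivization (AlgebraicClosure ℚ) (Fin 2 → AlgebraicClosure ℚ)

/-- The Weil height on `ℙ¹(ℚ̄)`. -/
noncomputable def projHeight (x : P1) : ℝ := pairHeight (x.rep 0) (x.rep 1)

open Classical in
/-- The self-map of `ℙ¹(ℚ̄)` induced by the pair of homogeneous forms `(G, H)`
(for coprime homogeneous forms the pair of evaluations never vanishes on `ℙ¹`). -/
noncomputable def applyF (G H : MvPolynomial (Fin 2) (AlgebraicClosure ℚ)) (x : P1) : P1 :=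
  if h : (![MvPolynomial.eval x.rep G, MvPolynomial.eval x.rep H] :
      Fin 2 → AlgebraicClosure ℚ) ≠ 0 then
    Projectivization.mk (AlgebraicClosure ℚ) _ h
  else x

/-- The forward orbit of `x` under the sequence of maps chosen by `seq` from the semigroup
generated by the rational maps `f_i = [G i : H i]`. -/
noncomputable def orbitPt {s : ℕ} (G H : Fin s → MvPolynomial (Fin 2) (AlgebraicClosure ℚ))
    (seq : ℕ → Fin s) (x : P1) : ℕ → P1
  | 0 => x
  | n + 1 => applyF (G (seq n)) (H (seq n)) (orbitPt G H seq x n)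

/-!
Let `L ⊇ K` be a number field over which `β` is defined; then every orbit point of `β` is
`L`-rational. The functional equation gives `ĥ_{Tⁿ𝐟}(fⁿ β) = d_{i_1} ⋯ d_{i_n} ĥ_𝐟(β)`, so if
`ĥ_𝐟(β) < (max d + 1)^{-N}`, the first `N + 1` orbit points have canonical height at most `1`,
hence Weil height at most `2c + 1`. Northcott's theorem (for the Mahler measure of integer
polynomials, applied to `ℓ · minpoly ℚ α` with `ℓ` the lcm of the denominators) bounds the
number of such `L`-points by some `N` independent of `𝐟`. So two of those orbit points
coincide, and repeating the word between them forever yields a sequence along which the orbit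
of `β` is finite.
-/

open Polynomial

local notation "ℚ̄" => AlgebraicClosure ℚ

noncomputable def denLcm (p : ℚ[X]) : ℕ := p.support.lcm fun i => (p.coeff i).den

lemma denLcm_ne_zero (p : ℚ[X]) : denLcm p ≠ 0 := by
  simp [denLcm, Finset.lcm_eq_zero_iff, Rat.den_ne_zero]

lemma C_denLcm_mul_mem_lifts (p : ℚ[X]) : C (denLcm p : ℚ) * p ∈ lifts (Int.castRingHom ℚ) := by
  refine (lifts_iff_coeff_lifts _).2 fun n => ?_
  rw [coeff_C_mul]
  by_cases hn : n ∈ p.support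
  · obtain ⟨k, hk⟩ : (p.coeff n).den ∣ denLcm p := Finset.dvd_lcm hn
    refine ⟨k * (p.coeff n).num, ?_⟩
    rw [hk]
    simp only [eq_intCast, Int.cast_mul, Int.cast_natCast, ← Rat.mul_den_eq_num]
    push_cast
    ring
  · exact ⟨0, by simp [notMem_support_iff.mp hn]⟩

lemma weilHeight_eq_log_mahlerMeasure (α : ℚ̄) :
    weilHeight α = Real.log ((C (denLcm (minpoly ℚ α) : ℚ) * minpoly ℚ α).map
      (algebraMap ℚ ℂ)).mahlerMeasure / (minpoly ℚ α).natDegree := by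
  have hα : IsIntegral ℚ α := ((AlgebraicClosure.isAlgebraic ℚ).isAlgebraic α).isIntegral
  set p := minpoly ℚ α
  have hmonic : (p.map (algebraMap ℚ ℂ)).Monic := (minpoly.monic hα).map _
  rw [Polynomial.map_mul, map_C, mahlerMeasure_eq_leadingCoeff_mul_prod_roots,
    roots_C_mul _ (by simp [denLcm_ne_zero]), leadingCoeff_mul, hmonic.leadingCoeff,
    leadingCoeff_C, mul_one, Real.log_mul (by simp [denLcm_ne_zero])
      (zero_lt_one.trans_le (one_le_prod_max_one_norm_roots _)).ne', Real.log_multiset_prod]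
  · simp [weilHeight, denLcm, p, aroots_def, Multiset.map_map]
  · simp only [Multiset.mem_map]
    rintro _ ⟨a, -, rfl⟩
    positivity

lemma exists_int_polynomial_log_mahlerMeasure_eq (α : ℚ̄) :
    ∃ q : ℤ[X], q ≠ 0 ∧ aeval α q = 0 ∧ q.natDegree = (minpoly ℚ α).natDegree ∧
      Real.log (q.map (Int.castRingHom ℂ)).mahlerMeasure =
        (minpoly ℚ α).natDegree * weilHeight α := by
  have hα : IsIntegral ℚ α := ((AlgebraicClosure.isAlgebraic ℚ).isAlgebraic α).isIntegral
  set p := minpoly ℚ α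
  have hℓ : (denLcm p : ℚ) ≠ 0 := by simp [denLcm_ne_zero]
  obtain ⟨q, hq⟩ : ∃ q : ℤ[X], q.map (Int.castRingHom ℚ) = C (denLcm p : ℚ) * p :=
    C_denLcm_mul_mem_lifts p
  have hqℂ : q.map (Int.castRingHom ℂ) = (C (denLcm p : ℚ) * p).map (algebraMap ℚ ℂ) := by
    rw [← hq, Polynomial.map_map]
    congr 1
  have hdeg : q.natDegree = p.natDegree := by
    rw [← natDegree_map_eq_of_injective (Int.castRingHom ℚ).injective_int, hq,
      natDegree_C_mul hℓ]
  have hq0 : q ≠ 0 := by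
    rintro rfl
    exact mul_ne_zero (C_ne_zero.2 hℓ) (minpoly.ne_zero hα) (by simpa using hq.symm)
  refine ⟨q, hq0, ?_, hdeg, ?_⟩
  · rw [← aeval_map_algebraMap ℚ, algebraMap_int_eq, hq]
    simp [p, minpoly.aeval]
  · have hn : (p.natDegree : ℝ) ≠ 0 := by
      simp [p, (minpoly.natDegree_pos hα).ne']
    rw [weilHeight_eq_log_mahlerMeasure, hqℂ, mul_div_cancel₀ _ hn]

theorem finite_setOf_natDegree_minpoly_le_weilHeight_le (D : ℕ) (B : ℝ) :
    {α : ℚ̄ | (minpoly ℚ α).natDegree ≤ D ∧ weilHeight α ≤ B}.Finite := by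
  let M : NNReal := ⟨Real.exp (D * max B 0), (Real.exp_pos _).le⟩
  refine ((finite_mahlerMeasure_le D M).biUnion fun q _ => q.rootSet_finite ℚ̄).subset ?_
  rintro α ⟨hD, hB⟩
  obtain ⟨q, hq0, hqα, hdeg, hlog⟩ := exists_int_polynomial_log_mahlerMeasure_eq α
  have hpos : 0 < (q.map (Int.castRingHom ℂ)).mahlerMeasure :=
    mahlerMeasure_pos_of_ne_zero
      ((Polynomial.map_ne_zero_iff (Int.castRingHom ℂ).injective_int).2 hq0)
  have hlog_le : Real.log (q.map (Int.castRingHom ℂ)).mahlerMeasure ≤ D * max B 0 := by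
    rw [hlog]
    calc ((minpoly ℚ α).natDegree : ℝ) * weilHeight α
        ≤ (minpoly ℚ α).natDegree * max B 0 := by gcongr; exact hB.trans (le_max_left _ _)
      _ ≤ D * max B 0 := by gcongr
  refine Set.mem_biUnion ⟨hdeg ▸ hD, ?_⟩ ((mem_rootSet).2 ⟨hq0, hqα⟩)
  exact (Real.log_le_iff_le_exp hpos).1 hlog_le

lemma MvPolynomial.IsHomogeneous.eval_smul {σ R : Type*} [CommSemiring R] [Fintype σ]
    {φ : MvPolynomial σ R} {n : ℕ} (hφ : φ.IsHomogeneous n) (t : R) (v : σ → R) :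
    MvPolynomial.eval (t • v) φ = t ^ n * MvPolynomial.eval v φ := by
  rw [MvPolynomial.eval_eq', MvPolynomial.eval_eq', Finset.mul_sum]
  refine Finset.sum_congr rfl fun m hm => ?_
  have hdeg : ∑ i, m i = n := by
    rw [← Finsupp.degree_eq_sum, Finsupp.degree_eq_weight_one]
    exact hφ (MvPolynomial.mem_support_iff.mp hm)
  simp only [Pi.smul_apply, smul_eq_mul, mul_pow, Finset.prod_mul_distrib,
    Finset.prod_pow_eq_pow_sum, hdeg]
  ring

def IsDefinedOver (L : IntermediateField ℚ ℚ̄) (x : P1) : Prop :=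
  ∃ (v : Fin 2 → ℚ̄) (hv : v ≠ 0), (∀ i, v i ∈ L) ∧ Projectivization.mk ℚ̄ v hv = x

lemma exists_finiteDimensional_isDefinedOver (K : IntermediateField ℚ ℚ̄)
    [FiniteDimensional ℚ K] (x : P1) :
    ∃ L : IntermediateField ℚ ℚ̄, FiniteDimensional ℚ L ∧ K ≤ L ∧ IsDefinedOver L x := by
  have : FiniteDimensional ℚ (IntermediateField.adjoin ℚ (Set.range x.rep)) :=
    IntermediateField.finiteDimensional_adjoin fun a _ =>
      ((AlgebraicClosure.isAlgebraic ℚ).isAlgebraic a).isIntegral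
  refine ⟨K ⊔ IntermediateField.adjoin ℚ (Set.range x.rep), inferInstance, le_sup_left,
    x.rep, x.rep_nonzero, fun i => ?_, x.mk_rep⟩
  exact (le_sup_right : IntermediateField.adjoin ℚ _ ≤ _)
    (IntermediateField.subset_adjoin ℚ _ (Set.mem_range_self i))

lemma exists_eval_rep_mk_eq_smul {G H : MvPolynomial (Fin 2) ℚ̄} {n : ℕ}
    (hG : G.IsHomogeneous n) (hH : H.IsHomogeneous n) (v : Fin 2 → ℚ̄) (hv : v ≠ 0) :
    ∃ t : ℚ̄ˣ, ![MvPolynomial.eval (Projectivization.mk ℚ̄ v hv).rep G,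
      MvPolynomial.eval (Projectivization.mk ℚ̄ v hv).rep H] =
      (t : ℚ̄) ^ n • ![MvPolynomial.eval v G, MvPolynomial.eval v H] := by
  obtain ⟨t, ht⟩ := Projectivization.exists_smul_eq_mk_rep ℚ̄ v hv
  refine ⟨t, ?_⟩
  rw [← ht, Units.smul_def, hG.eval_smul, hH.eval_smul]
  simp

lemma applyF_mk_of_ne_zero {G H : MvPolynomial (Fin 2) ℚ̄} {n : ℕ} (hG : G.IsHomogeneous n)
    (hH : H.IsHomogeneous n) {v : Fin 2 → ℚ̄} (hv : v ≠ 0)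
    (h : ![MvPolynomial.eval v G, MvPolynomial.eval v H] ≠ 0) :
    applyF G H (Projectivization.mk ℚ̄ v hv) = Projectivization.mk ℚ̄ _ h := by
  obtain ⟨t, ht⟩ := exists_eval_rep_mk_eq_smul hG hH v hv
  have h' : (t : ℚ̄) ^ n • ![MvPolynomial.eval v G, MvPolynomial.eval v H] ≠ 0 :=
    smul_ne_zero (pow_ne_zero _ t.ne_zero) h
  unfold applyF
  rw [dif_pos (ht ▸ h')]
  refine (Projectivization.mk_eq_mk_iff ℚ̄ _ _ _ h).2 ⟨t ^ n, ?_⟩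
  rw [ht, Units.smul_def, Units.val_pow_eq_pow_val]

lemma applyF_mk_of_eq_zero {G H : MvPolynomial (Fin 2) ℚ̄} {n : ℕ} (hG : G.IsHomogeneous n)
    (hH : H.IsHomogeneous n) {v : Fin 2 → ℚ̄} (hv : v ≠ 0)
    (h : ![MvPolynomial.eval v G, MvPolynomial.eval v H] = 0) :
    applyF G H (Projectivization.mk ℚ̄ v hv) = Projectivization.mk ℚ̄ v hv := by
  obtain ⟨t, ht⟩ := exists_eval_rep_mk_eq_smul hG hH v hv
  unfold applyF
  rw [dif_neg (by rw [ht, h, smul_zero]; exact not_not.2 rfl)]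

lemma IsDefinedOver.applyF {L : IntermediateField ℚ ℚ̄} {G H : MvPolynomial (Fin 2) ℚ̄} {n : ℕ}
    (hGL : ∀ m, G.coeff m ∈ L) (hHL : ∀ m, H.coeff m ∈ L)
    (hG : G.IsHomogeneous n) (hH : H.IsHomogeneous n) {x : P1} (hx : IsDefinedOver L x) :
    IsDefinedOver L (applyF G H x) := by
  obtain ⟨v, hv, hvL, rfl⟩ := hx
  by_cases h : ![MvPolynomial.eval v G, MvPolynomial.eval v H] = 0
  · exact ⟨v, hv, hvL, (applyF_mk_of_eq_zero hG hH hv h).symm⟩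
  · refine ⟨_, h, fun i => ?_, (applyF_mk_of_ne_zero hG hH hv h).symm⟩
    fin_cases i
    · exact MvPolynomial.eval_mem (fun m _ => hGL m) hvL
    · exact MvPolynomial.eval_mem (fun m _ => hHL m) hvL

noncomputable def affinePoint (α : ℚ̄) : P1 := Projectivization.mk ℚ̄ ![α, 1] (by simp)

noncomputable def pointAtInfinity : P1 := Projectivization.mk ℚ̄ ![1, 0] (by simp)

lemma projHeight_affinePoint (α : ℚ̄) : projHeight (affinePoint α) = weilHeight α := by
  obtain ⟨t, ht⟩ := Projectivization.exists_smul_eq_mk_rep ℚ̄ ![α, 1] (by simp)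
  rw [affinePoint, projHeight, pairHeight, ← ht]
  simp [Units.smul_def]

lemma mk_eq_affinePoint {v : Fin 2 → ℚ̄} (hv : v ≠ 0) (h1 : v 1 ≠ 0) :
    Projectivization.mk ℚ̄ v hv = affinePoint (v 0 / v 1) := by
  refine (Projectivization.mk_eq_mk_iff' ℚ̄ _ _ hv _).2 ⟨v 1, ?_⟩
  ext i
  fin_cases i <;> simp [mul_div_cancel₀ _ h1]

lemma mk_eq_pointAtInfinity {v : Fin 2 → ℚ̄} (hv : v ≠ 0) (h1 : v 1 = 0) :
    Projectivization.mk ℚ̄ v hv = pointAtInfinity := by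
  refine (Projectivization.mk_eq_mk_iff' ℚ̄ _ _ hv _).2 ⟨v 0, ?_⟩
  ext i
  fin_cases i <;> simp [h1]

lemma minpoly_natDegree_le_finrank {L : IntermediateField ℚ ℚ̄} [FiniteDimensional ℚ L]
    {α : ℚ̄} (hα : α ∈ L) : (minpoly ℚ α).natDegree ≤ Module.finrank ℚ L := by
  rw [← IntermediateField.minpoly_eq (⟨α, hα⟩ : L)]
  exact minpoly.natDegree_le _

theorem finite_setOf_isDefinedOver_projHeight_le (L : IntermediateField ℚ ℚ̄)
    [FiniteDimensional ℚ L] (B : ℝ) :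
    {x : P1 | IsDefinedOver L x ∧ projHeight x ≤ B}.Finite := by
  refine (((finite_setOf_natDegree_minpoly_le_weilHeight_le (Module.finrank ℚ L) B).image
    affinePoint).insert pointAtInfinity).subset ?_
  rintro _ ⟨⟨v, hv, hvL, rfl⟩, hB⟩
  by_cases h1 : v 1 = 0
  · exact Or.inl (mk_eq_pointAtInfinity hv h1)
  · rw [mk_eq_affinePoint hv h1] at hB ⊢
    refine Or.inr ⟨_, ⟨minpoly_natDegree_le_finrank (div_mem (hvL 0) (hvL 1)), ?_⟩, rfl⟩
    rwa [← projHeight_affinePoint]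

section Orbit

variable {s : ℕ} {G H : Fin s → MvPolynomial (Fin 2) ℚ̄}

lemma IsDefinedOver.orbitPt {L : IntermediateField ℚ ℚ̄} {d : Fin s → ℕ}
    (hGL : ∀ i m, (G i).coeff m ∈ L) (hHL : ∀ i m, (H i).coeff m ∈ L)
    (hG : ∀ i, (G i).IsHomogeneous (d i)) (hH : ∀ i, (H i).IsHomogeneous (d i))
    {x : P1} (hx : IsDefinedOver L x) (seq : ℕ → Fin s) (n : ℕ) :
    IsDefinedOver L (orbitPt G H seq x n) := by
  induction n with
  | zero => exact hx
  | succ n ih => exact ih.applyF (hGL _) (hHL _) (hG _) (hH _)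

/-- The ρ-shaped index path `0, 1, …, b - 1` followed by `a, …, b - 1` repeated forever. -/
def rhoIndex (a b : ℕ) : ℕ → ℕ
  | 0 => 0
  | k + 1 => if rhoIndex a b k + 1 = b then a else rhoIndex a b k + 1

lemma rhoIndex_lt {a b : ℕ} (hab : a < b) (k : ℕ) : rhoIndex a b k < b := by
  induction k with
  | zero => exact Nat.zero_lt_of_lt hab
  | succ k ih =>
    rw [rhoIndex]
    split_ifs with h <;> omega

lemma orbitPt_comp_rhoIndex {seq : ℕ → Fin s} {x : P1} {a b : ℕ}
    (hab : orbitPt G H seq x a = orbitPt G H seq x b) (k : ℕ) :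
    orbitPt G H (seq ∘ rhoIndex a b) x k = orbitPt G H seq x (rhoIndex a b k) := by
  induction k with
  | zero => rfl
  | succ k ih =>
    rw [orbitPt, ih, Function.comp_apply, rhoIndex]
    split_ifs with h
    · rw [hab]
      exact congrArg (orbitPt G H seq x) h
    · rfl

lemma orbitPt_injective {x : P1} (hx : ∀ seq, (Set.range (orbitPt G H seq x)).Infinite)
    (seq : ℕ → Fin s) : Function.Injective (orbitPt G H seq x) := by
  suffices ∀ a b, a < b → orbitPt G H seq x a ≠ orbitPt G H seq x b from
    fun a b hab => by_contra fun hne => (lt_or_gt_of_ne hne).elim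
      (fun h => this a b h hab) (fun h => this b a h hab.symm)
  intro a b hlt hab
  refine hx (seq ∘ rhoIndex a b) (((Set.finite_Iio b).image (orbitPt G H seq x)).subset ?_)
  rintro _ ⟨k, rfl⟩
  exact ⟨_, rhoIndex_lt hlt k, (orbitPt_comp_rhoIndex hab k).symm⟩

end Orbit

section CanonicalHeight

variable {s : ℕ} {d : Fin s → ℕ} {G H : Fin s → MvPolynomial (Fin 2) ℚ̄}
  {hcan : (ℕ → Fin s) → P1 → ℝ}

lemma canonicalHeight_orbitPt (hcanB : ∀ (seq : ℕ → Fin s) (x : P1),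
      hcan (fun n => seq (n + 1)) (applyF (G (seq 0)) (H (seq 0)) x) = d (seq 0) * hcan seq x)
    (seq : ℕ → Fin s) (x : P1) (n : ℕ) :
    hcan (fun m => seq (m + n)) (orbitPt G H seq x n) =
      (∏ k ∈ Finset.range n, (d (seq k) : ℝ)) * hcan seq x := by
  induction n with
  | zero => rw [Finset.prod_range_zero, one_mul]; rfl
  | succ n ih =>
    have hstep := hcanB (fun m => seq (m + n)) (orbitPt G H seq x n)
    simp only [zero_add, add_assoc, add_comm 1 n] at hstep
    rw [orbitPt, hstep, ih, Finset.prod_range_succ]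
    ring

lemma projHeight_orbitPt_le {c : ℝ}
    (hcanA : ∀ (seq : ℕ → Fin s) (x : P1), |hcan seq x - projHeight x| ≤ 2 * c)
    (hcanB : ∀ (seq : ℕ → Fin s) (x : P1),
      hcan (fun n => seq (n + 1)) (applyF (G (seq 0)) (H (seq 0)) x) = d (seq 0) * hcan seq x)
    {seq : ℕ → Fin s} {x : P1} {N : ℕ}
    (hsmall : hcan seq x < (((Finset.univ.sup d : ℕ) + 1 : ℝ) ^ N)⁻¹) {n : ℕ} (hn : n ≤ N) :
    projHeight (orbitPt G H seq x n) ≤ 2 * c + 1 := by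
  set A : ℝ := ((Finset.univ.sup d : ℕ) + 1 : ℝ) ^ N
  have hprod : ∏ k ∈ Finset.range n, (d (seq k) : ℝ) ≤ A := by
    have : ∏ k ∈ Finset.range n, d (seq k) ≤ (Finset.univ.sup d + 1) ^ N :=
      calc ∏ k ∈ Finset.range n, d (seq k)
          ≤ (Finset.univ.sup d + 1) ^ n := by
            simpa using Finset.prod_le_pow_card (Finset.range n) (fun k => d (seq k)) _
              fun k _ => (Finset.le_sup (Finset.mem_univ (seq k))).trans (Nat.le_succ _)
        _ ≤ (Finset.univ.sup d + 1) ^ N := Nat.pow_le_pow_right (Nat.succ_pos _) hn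
    simp only [A]
    exact_mod_cast this
  have hle_one : (∏ k ∈ Finset.range n, (d (seq k) : ℝ)) * hcan seq x ≤ 1 := by
    rcases le_or_gt (hcan seq x) 0 with hneg | hpos
    · exact (mul_nonpos_of_nonneg_of_nonpos (by positivity) hneg).trans zero_le_one
    · calc _ ≤ A * A⁻¹ := mul_le_mul hprod hsmall.le hpos.le (by positivity)
        _ = 1 := mul_inv_cancel₀ (by positivity)
  have := abs_le.mp (hcanA (fun m => seq (m + n)) (orbitPt G H seq x n))
  linarith [canonicalHeight_orbitPt hcanB seq x n]

end CanonicalHeight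

theorem canonical_height_lower_bound_general (K : IntermediateField ℚ (AlgebraicClosure ℚ))
    [FiniteDimensional ℚ K] (s : ℕ) (d : Fin s → ℕ)
    (G H : Fin s → MvPolynomial (Fin 2) (AlgebraicClosure ℚ))
    (hGK : ∀ i m, MvPolynomial.coeff m (G i) ∈ K)
    (hHK : ∀ i m, MvPolynomial.coeff m (H i) ∈ K)
    (hG : ∀ i, (G i).IsHomogeneous (d i)) (hH : ∀ i, (H i).IsHomogeneous (d i))
    (c : ℝ)
    (hcan : (ℕ → Fin s) → P1 → ℝ)
    (hcanA : ∀ (seq : ℕ → Fin s) (x : P1), |hcan seq x - projHeight x| ≤ 2 * c)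
    (hcanB : ∀ (seq : ℕ → Fin s) (x : P1),
      hcan (fun n => seq (n + 1)) (applyF (G (seq 0)) (H (seq 0)) x)
        = (d (seq 0) : ℝ) * hcan seq x)
    (β : P1) (hβ : ∀ seq : ℕ → Fin s, (Set.range (orbitPt G H seq β)).Infinite) :
    ∃ c₀ : ℝ, 0 < c₀ ∧ ∀ seq : ℕ → Fin s, c₀ ≤ hcan seq β := by
  obtain ⟨L, _, hKL, hβL⟩ := exists_finiteDimensional_isDefinedOver K β
  set F := {x : P1 | IsDefinedOver L x ∧ projHeight x ≤ 2 * c + 1}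
  have hF : F.Finite := finite_setOf_isDefinedOver_projHeight_le L _
  refine ⟨(((Finset.univ.sup d : ℕ) + 1 : ℝ) ^ F.ncard)⁻¹, by positivity, fun seq => ?_⟩
  by_contra! hsmall
  have hmaps : ∀ n ∈ Set.Iic F.ncard, orbitPt G H seq β n ∈ F := fun n hn =>
    ⟨hβL.orbitPt (fun i m => hKL (hGK i m)) (fun i m => hKL (hHK i m)) hG hH seq n,
      projHeight_orbitPt_le hcanA hcanB hsmall hn⟩
  have := Set.ncard_le_ncard_of_injOn _ hmaps (orbitPt_injective hβ seq).injOn hF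
  simp at this

/-- Uniform lower bound for canonical heights of non-preperiodic points: let
`𝒢 = ⟨f_1, …, f_s⟩` be generated by rational maps `f_i = [G i : H i]` of degrees `d i ≥ 2`
defined over a number field `K`, with `c = c(𝒢)` bounding `|(1/d_i)h(f_i x) − h(x)|`, and
suppose each sequence `seq` obtained from `𝒢` has a canonical height `hcan seq` satisfying
`|hcan seq x − h(x)| ≤ 2c(𝒢)` and `hcan (shift seq) (f_{seq 0} x) = d_{seq 0} · hcan seq x`.
If `β` is not preperiodic for `𝒢` (every forward orbit of `β` along a sequence from `𝒢` is
infinite), then there is a constant `c₀ > 0` with `hcan seq β ≥ c₀` for every sequence. -/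
theorem canonical_height_lower_bound (K : IntermediateField ℚ (AlgebraicClosure ℚ))
    [FiniteDimensional ℚ K] (s : ℕ) (d : Fin s → ℕ) (hd : ∀ i, 2 ≤ d i)
    (G H : Fin s → MvPolynomial (Fin 2) (AlgebraicClosure ℚ))
    (hGK : ∀ i m, MvPolynomial.coeff m (G i) ∈ K)
    (hHK : ∀ i m, MvPolynomial.coeff m (H i) ∈ K)
    (hG : ∀ i, (G i).IsHomogeneous (d i)) (hH : ∀ i, (H i).IsHomogeneous (d i))
    (hcop : ∀ i (p : MvPolynomial (Fin 2) (AlgebraicClosure ℚ)),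
      p ∣ G i → p ∣ H i → IsUnit p)
    (c : ℝ)
    (hc : ∀ i (x : P1), |((d i : ℝ))⁻¹ * projHeight (applyF (G i) (H i) x) - projHeight x| ≤ c)
    (hcan : (ℕ → Fin s) → P1 → ℝ)
    (hcanA : ∀ (seq : ℕ → Fin s) (x : P1), |hcan seq x - projHeight x| ≤ 2 * c)
    (hcanB : ∀ (seq : ℕ → Fin s) (x : P1),
      hcan (fun n => seq (n + 1)) (applyF (G (seq 0)) (H (seq 0)) x)
        = (d (seq 0) : ℝ) * hcan seq x)
    (β : P1) (hβ : ∀ seq : ℕ → Fin s, (Set.range (orbitPt G H seq β)).Infinite) :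
    ∃ c₀ : ℝ, 0 < c₀ ∧ ∀ seq : ℕ → Fin s, c₀ ≤ hcan seq β :=
  canonical_height_lower_bound_general K s d G H hGK hHK hG hH c hcan hcanA hcanB β hβ
end

section
/- Let 𝒢 = ⟨f_1, …, f_s⟩ be a semigroup generated by monomial maps f_i(z) = a_i z^{d_i} with a_i ∈ K∖{0} and |d_i| ≥ 2, over a number field K. Let v be any place of K and set r = min_{1≤i≤s} min(|a_i|_v^{1/(|d_i|−1)}, |a_i|_v^{−1/(|d_i|−1)}) ≤ 1. If α ∈ K̄∖{0} is preperiodic for 𝒢 (i.e., f_{i_n}∘⋯∘f_{i_1}(α) = f_{i_m}∘⋯∘f_{i_1}(α) for some n > m ≥ 0 and indices i_j), then r ≤ |α|_v ≤ 1/r. -/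
/-- Application of the word `f_{i_1 ⋯ i_n} = f_{i_n} ∘ ⋯ ∘ f_{i_1}` of the monomial
semigroup generated by `f_i(z) = a_i z^{d_i}` to a point `z`. -/
def monomialWord {F : Type*} [Field F] {s : ℕ} (a : Fin s → F) (d : Fin s → ℤ)
    (l : List (Fin s)) (z : F) : F :=
  l.foldl (fun w i => a i * w ^ d i) z

/-- A point `α` is preperiodic for the monomial semigroup `⟨f_1, …, f_s⟩` if some word
agrees with one of its proper prefixes at `α`. -/
def MonomialPreperiodic {F : Type*} [Field F] {s : ℕ} (a : Fin s → F) (d : Fin s → ℤ)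
    (α : F) : Prop :=
  ∃ l : List (Fin s), ∃ m : ℕ, m < l.length ∧
    monomialWord a d l α = monomialWord a d (l.take m) α

/-- The quantity `r = min_i min(|a_i|_v^{1/(|d_i|−1)}, |a_i|_v^{−1/(|d_i|−1)})`. -/
noncomputable def rOfG {F : Type*} [Field F] {s : ℕ} (hs : 0 < s)
    (v : AbsoluteValue F ℝ) (a : Fin s → F) (d : Fin s → ℤ) : ℝ :=
  Finset.univ.inf' (Finset.univ_nonempty_iff.mpr (Fin.pos_iff_nonempty.mp hs)) fun i =>
    min (v (a i) ^ (1 / (((d i).natAbs : ℝ) - 1)))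
        (v (a i) ^ (-(1 / (((d i).natAbs : ℝ) - 1))))

/-! Put `R = -log r`. The definition of `r` gives `|log |a_i|_v| ≤ (|d_i| - 1) R`, so if
`L = |log |z|_v| > R` then `|log |a_i z^{d_i}|_v| ≥ |d_i| L - (|d_i| - 1) R > L`. Outside the
annulus `r ≤ |z|_v ≤ 1/r` every generator therefore strictly increases `|log |·|_v|`, which
keeps the orbit outside the annulus and rules out a repetition along a word. -/

open Real

theorem abs_log_le_mul_neg_log {x r k : ℝ} (hx : 0 < x) (hr : 0 < r) (hk : 0 < k)
    (h : r ≤ min (x ^ (1 / k)) (x ^ (-(1 / k)))) : |log x| ≤ k * -log r := by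
  have hpos : log r ≤ log x / k := by
    simpa [log_rpow hx, div_eq_inv_mul] using log_le_log hr (h.trans (min_le_left _ _))
  have hneg : log r ≤ -log x / k := by
    simpa [log_rpow hx, div_eq_inv_mul] using log_le_log hr (h.trans (min_le_right _ _))
  rw [le_div_iff₀ hk] at hpos hneg
  rw [abs_le]
  constructor <;> linarith

theorem abs_log_le_neg_log_iff {x r : ℝ} (hx : 0 < x) (hr : 0 < r) :
    |log x| ≤ -log r ↔ r ≤ x ∧ x ≤ 1 / r := by
  rw [abs_le, neg_neg, one_div, ← log_le_log_iff hr hx, ← log_le_log_iff hx (inv_pos.2 hr),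
    log_inv]

section Monomial

variable {F : Type*} [Field F] {s : ℕ} (a : Fin s → F) (d : Fin s → ℤ)

theorem monomialWord_append (l₁ l₂ : List (Fin s)) (z : F) :
    monomialWord a d (l₁ ++ l₂) z = monomialWord a d l₂ (monomialWord a d l₁ z) :=
  List.foldl_append

theorem rOfG_pos (hs : 0 < s) (v : AbsoluteValue F ℝ) (ha : ∀ i, a i ≠ 0) :
    0 < rOfG hs v a d :=
  (Finset.lt_inf'_iff _).2 fun i _ =>
    lt_min (rpow_pos_of_pos (v.pos (ha i)) _) (rpow_pos_of_pos (v.pos (ha i)) _)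

theorem abs_log_le_of_rOfG (hs : 0 < s) (v : AbsoluteValue F ℝ) (ha : ∀ i, a i ≠ 0)
    {i : Fin s} (hd : 1 < |(d i : ℝ)|) :
    |log (v (a i))| ≤ (|(d i : ℝ)| - 1) * -log (rOfG hs v a d) := by
  have hD : ((d i).natAbs : ℝ) = |(d i : ℝ)| := by rw [Nat.cast_natAbs, Int.cast_abs]
  refine abs_log_le_mul_neg_log (v.pos (ha i)) (rOfG_pos a d hs v ha) (by linarith) ?_
  rw [← hD]
  exact Finset.inf'_le _ (Finset.mem_univ i)

end Monomial

namespace AbsoluteValue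

variable {F : Type*} [Field F] (v : AbsoluteValue F ℝ)

theorem abs_log_lt_abs_log_mul_zpow {c z : F} {e : ℤ} {R : ℝ} (hc : c ≠ 0)
    (he : 1 < |(e : ℝ)|) (hcR : |log (v c)| ≤ (|(e : ℝ)| - 1) * R)
    (hzR : R < |log (v z)|) : |log (v z)| < |log (v (c * z ^ e))| := by
  have hz : z ≠ 0 := by
    rintro rfl
    simp only [map_zero, log_zero, abs_zero] at hzR
    nlinarith [abs_nonneg (log (v c))]
  have hlog : log (v (c * z ^ e)) = log (v c) + e * log (v z) := by
    rw [map_mul, map_zpow₀, log_mul (v.pos hc).ne' (zpow_ne_zero _ (v.pos hz).ne'), log_zpow]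
  have htri : |(e : ℝ)| * |log (v z)| - |log (v c)| ≤ |log (v (c * z ^ e))| := by
    rw [hlog, ← abs_mul]
    have := abs_sub_abs_le_abs_sub (e * log (v z)) (-log (v c))
    rwa [abs_neg, sub_neg_eq_add, add_comm] at this
  nlinarith

end AbsoluteValue

section Escape

variable {F : Type*} [Field F] (v : AbsoluteValue F ℝ) {s : ℕ} {a : Fin s → F} {d : Fin s → ℤ}
  {R : ℝ}

theorem abs_log_lt_abs_log_monomialWord (ha : ∀ i, a i ≠ 0) (hd : ∀ i, 1 < |(d i : ℝ)|)
    (haR : ∀ i, |log (v (a i))| ≤ (|(d i : ℝ)| - 1) * R) :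
    ∀ {l : List (Fin s)} {z : F}, l ≠ [] → R < |log (v z)| →
      |log (v z)| < |log (v (monomialWord a d l z))|
  | [], _, hl, _ => absurd rfl hl
  | [i], _, _, hzR => v.abs_log_lt_abs_log_mul_zpow (ha i) (hd i) (haR i) hzR
  | i :: j :: l, _, _, hzR => by
    have hstep := v.abs_log_lt_abs_log_mul_zpow (ha i) (hd i) (haR i) hzR
    exact hstep.trans <|
      abs_log_lt_abs_log_monomialWord ha hd haR (List.cons_ne_nil j l) (hzR.trans hstep)

theorem abs_log_le_abs_log_monomialWord (ha : ∀ i, a i ≠ 0) (hd : ∀ i, 1 < |(d i : ℝ)|)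
    (haR : ∀ i, |log (v (a i))| ≤ (|(d i : ℝ)| - 1) * R) (l : List (Fin s)) {z : F}
    (hzR : R < |log (v z)|) : |log (v z)| ≤ |log (v (monomialWord a d l z))| := by
  rcases eq_or_ne l [] with rfl | hl
  · rfl
  · exact (abs_log_lt_abs_log_monomialWord v ha hd haR hl hzR).le

theorem MonomialPreperiodic.abs_log_le {α : F} (hα : MonomialPreperiodic a d α)
    (ha : ∀ i, a i ≠ 0) (hd : ∀ i, 1 < |(d i : ℝ)|)
    (haR : ∀ i, |log (v (a i))| ≤ (|(d i : ℝ)| - 1) * R) : |log (v α)| ≤ R := by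
  obtain ⟨l, m, hm, hcycle⟩ := hα
  by_contra! hαR
  set β := monomialWord a d (l.take m) α
  have hβR : R < |log (v β)| :=
    hαR.trans_le (abs_log_le_abs_log_monomialWord v ha hd haR _ hαR)
  have hdrop : l.drop m ≠ [] := by simpa using hm
  have hgrow := abs_log_lt_abs_log_monomialWord v ha hd haR hdrop hβR
  rw [← monomialWord_append, List.take_append_drop, hcycle] at hgrow
  exact hgrow.false

end Escape

/-- If `α ≠ 0` is preperiodic for the monomial semigroup `⟨a_i z^{d_i}⟩` (`a_i ≠ 0`,
`|d_i| ≥ 2`) then at every place `v`, `r ≤ |α|_v ≤ 1/r`. -/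
theorem monomial_preperiodic_size_bounds (F : Type*) [Field F]
    (v : AbsoluteValue F ℝ) (s : ℕ) (hs : 0 < s)
    (a : Fin s → F) (ha : ∀ i, a i ≠ 0) (d : Fin s → ℤ) (hd : ∀ i, 2 ≤ |d i|)
    (α : F) (hα : α ≠ 0) (hpre : MonomialPreperiodic a d α) :
    rOfG hs v a d ≤ v α ∧ v α ≤ 1 / rOfG hs v a d := by
  have hd' : ∀ i, 1 < |(d i : ℝ)| := fun i => by exact_mod_cast one_lt_two.trans_le (hd i)
  have hαr := hpre.abs_log_le v ha hd' fun i => abs_log_le_of_rOfG a d hs v ha (hd' i)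
  exact (abs_log_le_neg_log_iff (v.pos hα) (rOfG_pos a d hs v ha)).1 hαr
end

section
/- Let v be a non-archimedean place of a number field K over the rational prime p, and let 0 < ε < 1. Let α, β ∈ K̄_v with |α|_v = |β|_v ≠ 0. Then the number of roots of unity ζ ∈ K̄_v satisfying |ζα − β|_v < ε|β|_v is finite, and is bounded by a quantity depending only on K, v, and ε (not on α, β). -/
/-!
Dividing by one element `ζ₀` of the set, every `ζ` in it gives a root of unity `ξ = ζ / ζ₀`
with `|1 - ξ|_v < ε`, so it suffices to show that all such `ξ` lie in `μ_{p^N}` for one `N`.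
A root of unity of order `q` prime to `p` satisfies `|1 - ξ|_v ≥ |q|_v = 1`, hence `ξ` has
`p`-power order. The identity `1 - ξ^p = (1 - ξ) ∑_{i<p} ξ^i` with `∑_{i<p} ξ^i ≡ p` modulo
`1 - ξ` gives `|1 - ξ^p|_v ≤ M |1 - ξ|_v` for `M = max(|p|_v, ε) < 1`, so `|1 - ξ^{p^N}|_v` is
as small as we like; but a nontrivial `p`-th root of unity `x` has `|1 - x|_v ≥ |p|_v`, which
is positive unless `p = 0` in `L`, and then there are no such `x`.
-/

/-- The set of roots of unity `ζ` with `|ζα − β|_v < ε|β|_v`. -/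
def nearRootsOfUnity {L : Type*} [Field L] (v : AbsoluteValue L ℝ) (ε : ℝ) (α β : L) :
    Set L :=
  {ζ : L | (∃ n : ℕ, 0 < n ∧ ζ ^ n = 1) ∧ v (ζ * α - β) < ε * v β}

open Polynomial

section

variable {L : Type*} [Field L] {v : AbsoluteValue L ℝ}

lemma AbsoluteValue.apply_eq_one_of_pow_eq_one {ζ : L} {n : ℕ} (hn : n ≠ 0) (h : ζ ^ n = 1) :
    v ζ = 1 :=
  (pow_eq_one_iff_of_nonneg (v.nonneg ζ) hn).mp (by rw [← map_pow, h, map_one])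

lemma AbsoluteValue.apply_le_one_of_isOfFinOrder {ζ : L} (h : IsOfFinOrder ζ) : v ζ ≤ 1 :=
  (v.apply_eq_one_of_pow_eq_one h.orderOf_pos.ne' (pow_orderOf_eq_one ζ)).le

namespace IsNonarchimedean

lemma abv_sub_le_max (hna : IsNonarchimedean (v : L → ℝ)) (a b : L) :
    v (a - b) ≤ max (v a) (v b) := by
  simpa [sub_eq_add_neg] using hna a (-b)

lemma abv_sum_le {ι : Type*} (hna : IsNonarchimedean (v : L → ℝ)) {s : Finset ι} {f : ι → L}
    {t : ℝ} (ht : 0 ≤ t) (h : ∀ i ∈ s, v (f i) ≤ t) : v (∑ i ∈ s, f i) ≤ t := by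
  classical
  induction s using Finset.induction_on with
  | empty => simpa using ht
  | insert a s ha ih =>
    rw [Finset.sum_insert ha]
    exact (hna _ _).trans (max_le (h a (s.mem_insert_self a))
      (ih fun i hi => h i (Finset.mem_insert_of_mem hi)))

lemma abv_one_sub_pow_le (hna : IsNonarchimedean (v : L → ℝ)) {ζ : L} (hζ : v ζ ≤ 1) (r : ℕ) :
    v (1 - ζ ^ r) ≤ v (1 - ζ) := by
  have hgeom : 1 - ζ ^ r = (∑ i ∈ Finset.range r, ζ ^ i) * (1 - ζ) := by
    linear_combination geom_sum_mul ζ r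
  rw [hgeom, map_mul]
  refine mul_le_of_le_one_left (v.nonneg _) (hna.abv_sum_le zero_le_one fun i _ => ?_)
  rw [map_pow]
  exact pow_le_one₀ (v.nonneg ζ) hζ

lemma abv_natCast_le_abv_one_sub (hna : IsNonarchimedean (v : L → ℝ)) {x : L} {m : ℕ}
    (hm : m ≠ 0) (hx : x ^ m = 1) (hx1 : x ≠ 1) : v (m : L) ≤ v (1 - x) := by
  have hgeom : ∑ i ∈ Finset.range m, x ^ i = 0 := by
    have h := geom_sum_mul x m
    rw [hx, sub_self] at h
    exact (mul_eq_zero.mp h).resolve_right (sub_ne_zero_of_ne hx1)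
  have hm' : (m : L) = ∑ i ∈ Finset.range m, (1 - x ^ i) := by
    simp [Finset.sum_sub_distrib, hgeom]
  rw [hm']
  exact hna.abv_sum_le (v.nonneg _)
    fun i _ => hna.abv_one_sub_pow_le (v.apply_eq_one_of_pow_eq_one hm hx).le i

lemma abv_natCast_eq_one_of_not_dvd (hna : IsNonarchimedean (v : L → ℝ)) {p : ℕ}
    (hp : p.Prime) (hvp : v (p : L) < 1) {q : ℕ} (hq : ¬ p ∣ q) : v (q : L) = 1 := by
  refine (hna.apply_natCast_le_one).antisymm (not_lt.mp fun hvq => ?_)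
  obtain ⟨a, b, hab⟩ : IsCoprime (q : ℤ) p :=
    Nat.isCoprime_iff_coprime.mpr ((hp.coprime_iff_not_dvd.mpr hq).symm)
  have h1 : (a * q + b * p : L) = 1 := by
    have := congrArg (Int.cast : ℤ → L) hab
    push_cast at this
    exact this
  have hlt : v (a * q + b * p : L) < 1 := by
    refine (hna _ _).trans_lt (max_lt ?_ ?_) <;> rw [map_mul]
    · exact (mul_le_of_le_one_left (v.nonneg _) hna.apply_intCast_le_one).trans_lt hvq
    · exact (mul_le_of_le_one_left (v.nonneg _) hna.apply_intCast_le_one).trans_lt hvp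
  simp [h1] at hlt

lemma exists_orderOf_eq_prime_pow (hna : IsNonarchimedean (v : L → ℝ)) {p : ℕ} (hp : p.Prime)
    (hvp : v (p : L) < 1) {ξ : L} (hξ : IsOfFinOrder ξ) (hclose : v (1 - ξ) < 1) :
    ∃ i, orderOf ξ = p ^ i := by
  set n := orderOf ξ
  have hn : n ≠ 0 := hξ.orderOf_pos.ne'
  set k := n.factorization p
  set q := n / p ^ k
  have hpow : (ξ ^ p ^ k) ^ q = 1 := by
    rw [← pow_mul, Nat.ordProj_mul_ordCompl_eq_self n p, pow_orderOf_eq_one]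
  have hξk : ξ ^ p ^ k = 1 := by
    by_contra hne
    have hle := hna.abv_natCast_le_abv_one_sub (Nat.ordCompl_pos p hn).ne' hpow hne
    rw [hna.abv_natCast_eq_one_of_not_dvd hp hvp (Nat.not_dvd_ordCompl hp hn)] at hle
    exact (hle.trans (hna.abv_one_sub_pow_le (v.apply_le_one_of_isOfFinOrder hξ) _)).not_gt hclose
  obtain ⟨i, -, hi⟩ := (Nat.dvd_prime_pow hp).mp (orderOf_dvd_of_pow_eq_one hξk)
  exact ⟨i, hi⟩

lemma abv_one_sub_pow_prime_le (hna : IsNonarchimedean (v : L → ℝ)) (p : ℕ) {ξ : L}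
    (hξ : v ξ ≤ 1) : v (1 - ξ ^ p) ≤ max (v (p : L)) (v (1 - ξ)) * v (1 - ξ) := by
  have hgeom : 1 - ξ ^ p = (∑ i ∈ Finset.range p, ξ ^ i) * (1 - ξ) := by
    linear_combination geom_sum_mul ξ p
  have hsum : ∑ i ∈ Finset.range p, ξ ^ i = p - ∑ i ∈ Finset.range p, (1 - ξ ^ i) := by
    simp
  rw [hgeom, map_mul, hsum]
  refine mul_le_mul_of_nonneg_right ((hna.abv_sub_le_max _ _).trans (max_le_max le_rfl ?_))
    (v.nonneg _)
  exact hna.abv_sum_le (v.nonneg _) fun i _ => hna.abv_one_sub_pow_le hξ i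

lemma abv_one_sub_pow_prime_pow_le (hna : IsNonarchimedean (v : L → ℝ)) (p : ℕ) {ξ : L}
    (hξ : v ξ ≤ 1) {M : ℝ} (hpM : v (p : L) ≤ M) (hξM : v (1 - ξ) ≤ M) (hM1 : M ≤ 1) (j : ℕ) :
    v (1 - ξ ^ p ^ j) ≤ M ^ (j + 1) := by
  induction j with
  | zero => simpa using hξM
  | succ j ih =>
    have hξj : v (ξ ^ p ^ j) ≤ 1 := by
      rw [map_pow]
      exact pow_le_one₀ (v.nonneg ξ) hξ
    have hM : 0 ≤ M := (v.nonneg _).trans hpM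
    calc v (1 - ξ ^ p ^ (j + 1))
        = v (1 - (ξ ^ p ^ j) ^ p) := by rw [← pow_mul, pow_succ]
      _ ≤ max (v (p : L)) (v (1 - ξ ^ p ^ j)) * v (1 - ξ ^ p ^ j) :=
        hna.abv_one_sub_pow_prime_le p hξj
      _ ≤ M * M ^ (j + 1) := by
        gcongr
        exact max_le hpM (ih.trans (pow_le_of_le_one hM hM1 j.succ_ne_zero))
      _ = M ^ (j + 1 + 1) := (pow_succ' M _).symm

lemma exists_pos_le_abv_one_sub_of_pow_prime_eq_one (hna : IsNonarchimedean (v : L → ℝ))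
    {p : ℕ} (hp : p.Prime) :
    ∃ c > 0, ∀ x : L, x ^ p = 1 → x ≠ 1 → c ≤ v (1 - x) := by
  rcases (v.nonneg (p : L)).eq_or_lt with hv0 | hv0
  · have : Fact p.Prime := ⟨hp⟩
    have : CharP L p := (CharP.charP_iff_prime_eq_zero hp).mpr (v.eq_zero.mp hv0.symm)
    refine ⟨1, one_pos, fun x hx hx1 => absurd ?_ hx1⟩
    simpa using (ExpChar.pow_prime_pow_mul_eq_one_iff p 1 1 x).mp (by simpa using hx)
  · exact ⟨v p, hv0, fun x hx hx1 => hna.abv_natCast_le_abv_one_sub hp.ne_zero hx hx1⟩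

lemma exists_pow_prime_pow_eq_one (hna : IsNonarchimedean (v : L → ℝ)) {p : ℕ} (hp : p.Prime)
    (hvp : v (p : L) < 1) {ε : ℝ} (hε1 : ε < 1) :
    ∃ N : ℕ, ∀ ξ : L, IsOfFinOrder ξ → v (1 - ξ) < ε → ξ ^ p ^ N = 1 := by
  obtain ⟨c, hc, hcx⟩ := hna.exists_pos_le_abv_one_sub_of_pow_prime_eq_one hp
  set M := max (v (p : L)) ε
  have hM1 : M < 1 := max_lt hvp hε1
  obtain ⟨N, hN⟩ := exists_pow_lt_of_lt_one hc hM1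
  refine ⟨N, fun ξ hξ hclose => ?_⟩
  obtain ⟨i, hi⟩ := hna.exists_orderOf_eq_prime_pow hp hvp hξ (hclose.trans hε1)
  rcases le_or_gt i N with hiN | hNi
  · exact orderOf_dvd_iff_pow_eq_one.mp (hi ▸ pow_dvd_pow p hiN)
  set x := ξ ^ p ^ (i - 1)
  have hxp : x ^ p = 1 := by
    rw [← pow_mul, ← pow_succ, Nat.sub_add_cancel (by omega), ← hi, pow_orderOf_eq_one]
  have hx1 : x ≠ 1 :=
    pow_ne_one_of_lt_orderOf (pow_ne_zero _ hp.ne_zero)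
      (hi ▸ Nat.pow_lt_pow_right hp.one_lt (by omega))
  have hxN : x = (ξ ^ p ^ N) ^ p ^ (i - 1 - N) := by
    rw [← pow_mul, ← pow_add, Nat.add_sub_cancel' (by omega)]
  have hM : 0 ≤ M := (v.nonneg _).trans (le_max_left _ _)
  have hξ1 := v.apply_le_one_of_isOfFinOrder hξ
  have hcM : c ≤ M ^ N :=
    calc c ≤ v (1 - x) := hcx x hxp hx1
      _ ≤ v (1 - ξ ^ p ^ N) := by
        rw [hxN]
        refine hna.abv_one_sub_pow_le ?_ _
        rw [map_pow]
        exact pow_le_one₀ (v.nonneg _) hξ1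
      _ ≤ M ^ (N + 1) := hna.abv_one_sub_pow_prime_pow_le p hξ1 (le_max_left _ _)
        (hclose.le.trans (le_max_right _ _)) hM1.le N
      _ ≤ M ^ N := pow_le_pow_of_le_one hM hM1.le N.le_succ
  exact absurd hN hcM.not_gt

lemma abv_sub_lt_of_mem_nearRootsOfUnity (hna : IsNonarchimedean (v : L → ℝ)) {ε : ℝ}
    {α β ζ ζ' : L} (hαβ : v α = v β) (hζ : ζ ∈ nearRootsOfUnity v ε α β)
    (hζ' : ζ' ∈ nearRootsOfUnity v ε α β) : v (ζ - ζ') < ε := by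
  have h : v ((ζ - ζ') * α) < ε * v α := by
    rw [show (ζ - ζ') * α = (ζ * α - β) - (ζ' * α - β) by ring, hαβ]
    exact (hna.abv_sub_le_max _ _).trans_lt (max_lt hζ.2 hζ'.2)
  rw [map_mul] at h
  exact lt_of_mul_lt_mul_right h (v.nonneg α)

end IsNonarchimedean

lemma finite_and_natCard_le_of_forall_pow_div_eq_one {S : Set L} {ζ₀ : L} (hζ₀ : ζ₀ ≠ 0)
    {n : ℕ} (hn : 0 < n) (h : ∀ ζ ∈ S, (ζ / ζ₀) ^ n = 1) : S.Finite ∧ Nat.card S ≤ n := by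
  classical
  set F := (nthRootsFinset n (1 : L)).image (· * ζ₀)
  have hSF : S ⊆ F := fun ζ hζ => Finset.mem_image.mpr
    ⟨ζ / ζ₀, (mem_nthRootsFinset hn 1).mpr (h ζ hζ), div_mul_cancel₀ ζ hζ₀⟩
  refine ⟨F.finite_toSet.subset hSF, ?_⟩
  calc Nat.card S = S.ncard := Nat.card_coe_set_eq S
    _ ≤ (F : Set L).ncard := Set.ncard_le_ncard hSF F.finite_toSet
    _ = F.card := Set.ncard_coe_finset F
    _ ≤ (nthRootsFinset n (1 : L)).card := Finset.card_image_le
    _ ≤ n := by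
      rw [nthRootsFinset_def]
      exact (Multiset.toFinset_card_le _).trans (card_nthRoots n 1)

end

theorem card_nearRootsOfUnity_bounded_general (L : Type*) [Field L]
    (v : AbsoluteValue L ℝ) (hna : IsNonarchimedean (v : L → ℝ))
    (p : ℕ) (hp : p.Prime) (hvp : v (p : L) < 1)
    (ε : ℝ) (hε1 : ε < 1) :
    ∃ C : ℕ, ∀ α β : L, α ≠ 0 → β ≠ 0 → v α = v β →
      (nearRootsOfUnity v ε α β).Finite ∧
      Nat.card (nearRootsOfUnity v ε α β) ≤ C := by
  obtain ⟨N, hN⟩ := hna.exists_pow_prime_pow_eq_one hp hvp hε1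
  refine ⟨p ^ N, fun α β _ _ hαβ => ?_⟩
  rcases (nearRootsOfUnity v ε α β).eq_empty_or_nonempty with hS | ⟨ζ₀, hζ₀⟩
  · simp [hS]
  obtain ⟨n₀, hn₀, hζ₀n⟩ := hζ₀.1
  have hvζ₀ : v ζ₀ = 1 := v.apply_eq_one_of_pow_eq_one hn₀.ne' hζ₀n
  have hζ₀0 : ζ₀ ≠ 0 := by rintro rfl; simp at hvζ₀
  refine finite_and_natCard_le_of_forall_pow_div_eq_one hζ₀0 (pow_pos hp.pos N)
    fun ζ hζ => hN _ ?_ ?_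
  · obtain ⟨n, hn, hζn⟩ := hζ.1
    refine isOfFinOrder_iff_pow_eq_one.mpr ⟨n * n₀, by positivity, ?_⟩
    rw [div_pow, pow_mul, hζn, one_pow, mul_comm, pow_mul, hζ₀n, one_pow, div_one]
  · rw [one_sub_div hζ₀0, map_div₀, hvζ₀, div_one]
    exact hna.abv_sub_lt_of_mem_nearRootsOfUnity hαβ hζ₀ hζ

/-- Let `v` be a non-archimedean place (over the rational prime `p`, so `|p|_v < 1`) with
absolute value extended to `K̄_v`, and let `0 < ε < 1`.  Then the number of roots of unity `ζ`
with `|ζα − β|_v < ε|β|_v` is finite, bounded by a constant depending only on the valued field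
and `ε` (not on `α, β` with `|α|_v = |β|_v ≠ 0`). -/
theorem card_nearRootsOfUnity_bounded (L : Type*) [Field L]
    (v : AbsoluteValue L ℝ) (hna : IsNonarchimedean (v : L → ℝ))
    (p : ℕ) (hp : p.Prime) (hvp : v (p : L) < 1)
    (ε : ℝ) (hε0 : 0 < ε) (hε1 : ε < 1) :
    ∃ C : ℕ, ∀ α β : L, α ≠ 0 → β ≠ 0 → v α = v β →
      (nearRootsOfUnity v ε α β).Finite ∧
      Nat.card (nearRootsOfUnity v ε α β) ≤ C :=
  card_nearRootsOfUnity_bounded_general L v hna p hp hvp ε hε1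
end

section
/- Let 𝒢 = ⟨f_1, …, f_s⟩ be a semigroup of monomial maps f_i(z) = a_i z^{d_i} over a number field K, with a_i ≠ 0 and |d_i| ≥ 2. If α ∈ K̄∖{0} is preperiodic for 𝒢, then there exist an integer N ≥ 1 and integers k_1, …, k_s with |k_i| ≤ N such that α^N = a_1^{k_1} ⋯ a_s^{k_s}. -/
def monomialWordExp {s : ℕ} (d : Fin s → ℤ) : List (Fin s) → Fin s → ℤ
  | [] => 0
  | j :: l => monomialWordExp d l + Pi.single j (l.map d).prod

theorem two_pow_length_le_abs_prod (l : List ℤ) (hl : ∀ x ∈ l, 2 ≤ |x|) :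
    2 ^ l.length ≤ |l.prod| := by
  induction l with
  | nil => simp
  | cons x l ih =>
    have hx := hl x List.mem_cons_self
    have ih := ih fun y hy => hl y (List.mem_cons_of_mem x hy)
    rw [List.prod_cons, abs_mul, List.length_cons, pow_succ']
    exact mul_le_mul hx ih (by positivity) (abs_nonneg x)

theorem exists_pow_eq_prod_of_zpow_eq {G ι : Type*} [DivisionCommMonoid G] [Fintype ι]
    {x : G} {b : ι → G} {M : ℤ} {k : ι → ℤ} (hM : M ≠ 0) (hk : ∀ i, |k i| ≤ |M|)
    (h : x ^ M = ∏ i, b i ^ k i) :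
    ∃ N : ℕ, 1 ≤ N ∧ ∃ k' : ι → ℤ, (∀ i, |k' i| ≤ (N : ℤ)) ∧
      x ^ N = ∏ i, b i ^ k' i := by
  refine ⟨M.natAbs, Int.natAbs_pos.mpr hM, ?_⟩
  have hk : ∀ i, |k i| ≤ M.natAbs := fun i => (hk i).trans_eq (Int.abs_eq_natAbs M)
  rcases Int.natAbs_eq M with hpos | hneg
  · refine ⟨k, hk, ?_⟩
    rw [← zpow_natCast, ← hpos, h]
  · refine ⟨-k, fun i => by simpa using hk i, ?_⟩
    rw [← zpow_natCast, ← neg_neg (M.natAbs : ℤ), ← hneg, zpow_neg, h,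
      ← Finset.prod_inv_distrib]
    exact Finset.prod_congr rfl fun i _ => (zpow_neg _ _).symm

section

variable {s : ℕ} (d : Fin s → ℤ)

theorem monomialWordExp_append (p t : List (Fin s)) :
    monomialWordExp d (p ++ t) = monomialWordExp d t + (t.map d).prod • monomialWordExp d p := by
  induction p with
  | nil => simp [monomialWordExp]
  | cons j p ih =>
    ext i
    simp only [List.cons_append, monomialWordExp, ih, List.map_append, List.prod_append,
      Pi.add_apply, Pi.smul_apply, smul_eq_mul, Pi.single_apply]
    split <;> ring

theorem sum_abs_monomialWordExp_le (hd : ∀ i, 2 ≤ |d i|) (l : List (Fin s)) :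
    ∑ i, |monomialWordExp d l i| ≤ |(l.map d).prod| - 1 := by
  induction l with
  | nil => simp [monomialWordExp]
  | cons j l ih =>
    have hsingle : ∑ i, |(Pi.single j (l.map d).prod : Fin s → ℤ) i| = |(l.map d).prod| := by
      simp [Pi.single_apply, apply_ite]
    calc ∑ i, |monomialWordExp d (j :: l) i|
        ≤ ∑ i, |monomialWordExp d l i|
            + ∑ i, |(Pi.single j (l.map d).prod : Fin s → ℤ) i| := by
          rw [← Finset.sum_add_distrib]
          exact Finset.sum_le_sum fun i _ => abs_add_le _ _
      _ ≤ |d j| * |(l.map d).prod| - 1 := by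
          rw [hsingle]
          nlinarith [hd j, abs_nonneg (l.map d).prod]
      _ = |((j :: l).map d).prod| - 1 := by simp [abs_mul]

theorem sum_abs_sub_monomialWordExp_append_le (hd : ∀ i, 2 ≤ |d i|) (p t : List (Fin s)) :
    ∑ i, |monomialWordExp d p i - monomialWordExp d (p ++ t) i|
      ≤ |(p.map d).prod * ((t.map d).prod - 1)| := by
  set D := (p.map d).prod
  set P := (t.map d).prod
  have hp := sum_abs_monomialWordExp_le d hd p
  have ht := sum_abs_monomialWordExp_le d hd t
  have hP : |P| - 1 ≤ |P - 1| := by simpa using abs_sub_abs_le_abs_sub P 1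
  calc ∑ i, |monomialWordExp d p i - monomialWordExp d (p ++ t) i|
      = ∑ i, |(1 - P) * monomialWordExp d p i - monomialWordExp d t i| := by
        simp only [monomialWordExp_append, Pi.add_apply, Pi.smul_apply, smul_eq_mul]
        congr! 2
        ring
    _ ≤ ∑ i, (|P - 1| * |monomialWordExp d p i| + |monomialWordExp d t i|) := by
        refine Finset.sum_le_sum fun i _ => (abs_sub _ _).trans ?_
        rw [abs_mul, abs_sub_comm]
    _ ≤ |P - 1| * (|D| - 1) + (|P| - 1) := by
        rw [Finset.sum_add_distrib, ← Finset.mul_sum]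
        gcongr
    _ ≤ |D * (P - 1)| := by
        rw [abs_mul]
        linarith

theorem monomialWord_eq_prod_mul_zpow {F : Type*} [Field F] (a : Fin s → F)
    (ha : ∀ i, a i ≠ 0) (l : List (Fin s)) {z : F} (hz : z ≠ 0) :
    monomialWord a d l z = (∏ i, a i ^ monomialWordExp d l i) * z ^ (l.map d).prod := by
  induction l generalizing z with
  | nil => simp [monomialWord, monomialWordExp]
  | cons j l ih =>
    have hz' : a j * z ^ d j ≠ 0 := mul_ne_zero (ha j) (zpow_ne_zero _ hz)
    have hsingle :
        ∏ i, a i ^ (Pi.single j (l.map d).prod : Fin s → ℤ) i = a j ^ (l.map d).prod := by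
      simp [Pi.single_apply]
    simp only [monomialWord, List.foldl_cons] at ih ⊢
    rw [ih hz', monomialWordExp, List.map_cons, List.prod_cons]
    simp only [Pi.add_apply, zpow_add₀ (ha _), Finset.prod_mul_distrib, hsingle]
    rw [mul_zpow, ← zpow_mul]
    ring

theorem exists_zpow_eq_prod_of_monomialWord_append_eq {F : Type*} [Field F] (a : Fin s → F)
    (ha : ∀ i, a i ≠ 0) (hd : ∀ i, 2 ≤ |d i|) {α : F} (hα : α ≠ 0) {p t : List (Fin s)}
    (ht : t ≠ []) (h : monomialWord a d (p ++ t) α = monomialWord a d p α) :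
    ∃ M : ℤ, M ≠ 0 ∧ ∃ k : Fin s → ℤ, (∀ i, |k i| ≤ |M|) ∧
      α ^ M = ∏ i, a i ^ k i := by
  set D := (p.map d).prod
  set P := (t.map d).prod
  have hd' : ∀ l : List (Fin s), ∀ x ∈ l.map d, 2 ≤ |x| := by simp [hd]
  have hD : D ≠ 0 :=
    abs_pos.mp <| (pow_pos two_pos _).trans_le (two_pow_length_le_abs_prod _ (hd' p))
  have hP : P ≠ 1 := by
    have h2 : 2 ≤ |P| :=
      (le_self_pow₀ one_le_two (by simpa using ht)).trans (two_pow_length_le_abs_prod _ (hd' t))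
    rintro hP1
    norm_num [hP1] at h2
  refine ⟨D * (P - 1), mul_ne_zero hD (sub_ne_zero.mpr hP),
    monomialWordExp d p - monomialWordExp d (p ++ t), fun i => ?_, ?_⟩
  · exact (Finset.single_le_sum (fun j _ => abs_nonneg _) (Finset.mem_univ i)).trans
      (sum_abs_sub_monomialWordExp_append_le d hd p t)
  · have hc : ∏ i, a i ^ monomialWordExp d (p ++ t) i ≠ 0 :=
      Finset.prod_ne_zero_iff.mpr fun i _ => zpow_ne_zero _ (ha i)
    rw [monomialWord_eq_prod_mul_zpow d a ha _ hα, monomialWord_eq_prod_mul_zpow d a ha _ hα,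
      List.map_append, List.prod_append] at h
    simp only [Pi.sub_apply, zpow_sub₀ (ha _), Finset.prod_div_distrib, mul_sub, mul_one,
      zpow_sub₀ hα]
    rw [div_eq_div_iff (zpow_ne_zero _ hα) hc]
    linear_combination h

end

theorem monomial_preperiodic_power_eq_general (K : Type*) [Field K]
    (F : Type*) [Field F] [Algebra K F] (s : ℕ)
    (a : Fin s → K) (ha : ∀ i, a i ≠ 0) (d : Fin s → ℤ) (hd : ∀ i, 2 ≤ |d i|)
    (α : F) (hα : α ≠ 0)
    (hpre : MonomialPreperiodic (fun i => algebraMap K F (a i)) d α) :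
    ∃ N : ℕ, 1 ≤ N ∧ ∃ k : Fin s → ℤ, (∀ i, |k i| ≤ (N : ℤ)) ∧
      α ^ N = ∏ i, algebraMap K F (a i) ^ k i := by
  obtain ⟨l, m, hm, heq⟩ := hpre
  have ht : l.drop m ≠ [] := by simpa using hm
  obtain ⟨M, hM, k, hk, hαM⟩ := exists_zpow_eq_prod_of_monomialWord_append_eq d _
    (fun i => (map_ne_zero _).mpr (ha i)) hd hα ht (by rwa [List.take_append_drop])
  exact exists_pow_eq_prod_of_zpow_eq hM hk hαM

/-- If `α ≠ 0` is preperiodic for the monomial semigroup generated by `f_i(z) = a_i z^{d_i}`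
(`a_i ≠ 0`, `|d_i| ≥ 2`) over a number field `K`, then `α^N = a_1^{k_1} ⋯ a_s^{k_s}` for some
`N ≥ 1` and integers `k_i` with `|k_i| ≤ N`. -/
theorem monomial_preperiodic_power_eq (K : Type*) [Field K] [NumberField K]
    (F : Type*) [Field F] [Algebra K F] (s : ℕ)
    (a : Fin s → K) (ha : ∀ i, a i ≠ 0) (d : Fin s → ℤ) (hd : ∀ i, 2 ≤ |d i|)
    (α : F) (hα : α ≠ 0)
    (hpre : MonomialPreperiodic (fun i => algebraMap K F (a i)) d α) :
    ∃ N : ℕ, 1 ≤ N ∧ ∃ k : Fin s → ℤ, (∀ i, |k i| ≤ (N : ℤ)) ∧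
      α ^ N = ∏ i, algebraMap K F (a i) ^ k i :=
  monomial_preperiodic_power_eq_general K F s a ha d hd α hα hpre
end
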